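/- arXiv:2509.09047 — 5 statements merged into one kernel-verified Lean document; each statement's English description precedes it below -/
import Mathlib

section
/- Let G be a locally compact topological group with a Haar measure μ that is invariant under all left and right translations (G unimodular). Let Q ≤ P be compact open subgroups of G and let Ω ⊆ P be a finite subset such that P = ΩQ = QΩ. Then for every g ∈ G one has μ(QgQ) ≤ μ(PgP) ≤ |Ω|² · μ(QgQ), where QgQ = {q₁ g q₂ : q₁, q₂ ∈ Q} and PgP = {p₁ g p₂ : p₁, p₂ ∈ P}. -/
open MeasureTheory DoubleCoset
open scoped Pointwise

/-!
Write `PgP = P * {g} * P` pointwise. From `P = ΩQ = QΩ` we get `PgP = Ω * QgQ * Ω`, a union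
of `|Ω|²` two-sided translates of `QgQ`, each of measure `μ(QgQ)` by bi-invariance; the lower
bound is monotonicity under `Q ≤ P`.
-/

section Translates

variable {G : Type*} [Group G] [MeasurableSpace G] [MeasurableMul G] (μ : Measure G)

theorem measure_image_mul_left [μ.IsMulLeftInvariant] (a : G) (s : Set G) :
    μ ((a * ·) '' s) = μ s := by
  rw [Set.image_mul_left, measure_preimage_mul]

theorem measure_image_mul_right [μ.IsMulRightInvariant] (b : G) (s : Set G) :
    μ ((· * b) '' s) = μ s := by
  rw [Set.image_mul_right, measure_preimage_mul_right]

theorem measure_finset_mul_le [μ.IsMulLeftInvariant] (A : Finset G) (s : Set G) :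
    μ ((A : Set G) * s) ≤ A.card * μ s := by
  calc μ ((A : Set G) * s) = μ (⋃ a ∈ A, (a * ·) '' s) := by
        rw [← Set.iUnion_mul_left_image]; rfl
    _ ≤ ∑ a ∈ A, μ ((a * ·) '' s) := measure_biUnion_finset_le A _
    _ = A.card * μ s := by simp only [measure_image_mul_left, Finset.sum_const, nsmul_eq_mul]

theorem measure_mul_finset_le [μ.IsMulRightInvariant] (s : Set G) (B : Finset G) :
    μ (s * (B : Set G)) ≤ B.card * μ s := by
  calc μ (s * (B : Set G)) = μ (⋃ b ∈ B, (· * b) '' s) := by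
        rw [← Set.iUnion_mul_right_image]; rfl
    _ ≤ ∑ b ∈ B, μ ((· * b) '' s) := measure_biUnion_finset_le B _
    _ = B.card * μ s := by simp only [measure_image_mul_right, Finset.sum_const, nsmul_eq_mul]

theorem measure_finset_mul_mul_finset_le [μ.IsMulLeftInvariant] [μ.IsMulRightInvariant]
    (A B : Finset G) (s : Set G) :
    μ ((A : Set G) * s * B) ≤ A.card * B.card * μ s :=
  calc μ ((A : Set G) * s * B) ≤ B.card * μ ((A : Set G) * s) := measure_mul_finset_le μ _ B
    _ ≤ B.card * (A.card * μ s) := by gcongr; exact measure_finset_mul_le μ A s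
    _ = A.card * B.card * μ s := by ring

end Translates

theorem setOf_exists_mul_eq {G : Type*} [Mul G] (s t : Set G) :
    {x : G | ∃ a ∈ s, ∃ b ∈ t, x = a * b} = s * t := by
  ext x
  simp only [Set.mem_ofPred_eq, Set.mem_mul, eq_comm]

theorem setOf_exists_mul_mul_eq_doubleCoset {G : Type*} [Mul G] (g : G) (s t : Set G) :
    {x : G | ∃ a ∈ s, ∃ b ∈ t, x = a * g * b} = doubleCoset g s t :=
  Set.ext fun _ => mem_doubleCoset.symm

theorem doubleCoset_mono {G : Type*} [Mul G] (g : G) {s t : Set G} (hst : s ⊆ t) :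
    doubleCoset g s s ⊆ doubleCoset g t t :=
  Set.mul_subset_mul (Set.mul_subset_mul_right hst) hst

theorem doubleCoset_eq_mul_doubleCoset_mul {G : Type*} [Semigroup G]
    {P Q Ω : Set G} (hΩQ : Ω * Q = P) (hQΩ : Q * Ω = P) (g : G) :
    doubleCoset g P P = Ω * doubleCoset g Q Q * Ω :=
  calc doubleCoset g P P = Ω * Q * {g} * (Q * Ω) := by rw [hΩQ, hQΩ]; rfl
    _ = Ω * doubleCoset g Q Q * Ω := by simp only [doubleCoset, mul_assoc]

theorem haar_double_coset_comparison_general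
    {G : Type*} [Group G] [TopologicalSpace G] [IsTopologicalGroup G]
    [MeasurableSpace G] [BorelSpace G]
    (μ : Measure G) [μ.IsHaarMeasure] [μ.IsMulRightInvariant]
    (Q P : Subgroup G) (hQP : Q ≤ P)
    (Ω : Finset G)
    (hPQ1 : {x : G | ∃ ω ∈ Ω, ∃ q ∈ Q, x = ω * q} = (P : Set G))
    (hPQ2 : {x : G | ∃ q ∈ Q, ∃ ω ∈ Ω, x = q * ω} = (P : Set G))
    (g : G) :
    μ {x : G | ∃ q₁ ∈ Q, ∃ q₂ ∈ Q, x = q₁ * g * q₂} ≤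
        μ {x : G | ∃ p₁ ∈ P, ∃ p₂ ∈ P, x = p₁ * g * p₂} ∧
    μ {x : G | ∃ p₁ ∈ P, ∃ p₂ ∈ P, x = p₁ * g * p₂} ≤
        (Ω.card : ENNReal) ^ 2 * μ {x : G | ∃ q₁ ∈ Q, ∃ q₂ ∈ Q, x = q₁ * g * q₂} := by
  simp only [← SetLike.mem_coe, setOf_exists_mul_eq,
    setOf_exists_mul_mul_eq_doubleCoset] at hPQ1 hPQ2 ⊢
  refine ⟨measure_mono (doubleCoset_mono g hQP), ?_⟩
  calc μ (doubleCoset g P P) = μ (Ω * doubleCoset g Q Q * Ω) := by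
        rw [doubleCoset_eq_mul_doubleCoset_mul hPQ1 hPQ2]
    _ ≤ Ω.card * Ω.card * μ (doubleCoset g Q Q) := measure_finset_mul_mul_finset_le μ Ω Ω _
    _ = (Ω.card : ENNReal) ^ 2 * μ (doubleCoset g Q Q) := by rw [sq]

/-- Comparison of Haar measures of double cosets for nested compact open
subgroups: if `G` is a locally compact group with a bi-invariant Haar
measure `μ`, `Q ≤ P` are compact open subgroups, and `Ω ⊆ P` is a finite
set with `P = ΩQ = QΩ`, then for every `g ∈ G`,
`μ(QgQ) ≤ μ(PgP) ≤ |Ω|² · μ(QgQ)`. -/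
theorem haar_double_coset_comparison
    {G : Type*} [Group G] [TopologicalSpace G] [IsTopologicalGroup G]
    [LocallyCompactSpace G] [MeasurableSpace G] [BorelSpace G]
    (μ : Measure G) [μ.IsHaarMeasure] [μ.IsMulRightInvariant]
    (Q P : Subgroup G) (hQP : Q ≤ P)
    (hQc : IsCompact (Q : Set G)) (hQo : IsOpen (Q : Set G))
    (hPc : IsCompact (P : Set G)) (hPo : IsOpen (P : Set G))
    (Ω : Finset G) (hΩP : (Ω : Set G) ⊆ (P : Set G))
    (hPQ1 : {x : G | ∃ ω ∈ Ω, ∃ q ∈ Q, x = ω * q} = (P : Set G))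
    (hPQ2 : {x : G | ∃ q ∈ Q, ∃ ω ∈ Ω, x = q * ω} = (P : Set G))
    (g : G) :
    μ {x : G | ∃ q₁ ∈ Q, ∃ q₂ ∈ Q, x = q₁ * g * q₂} ≤
        μ {x : G | ∃ p₁ ∈ P, ∃ p₂ ∈ P, x = p₁ * g * p₂} ∧
    μ {x : G | ∃ p₁ ∈ P, ∃ p₂ ∈ P, x = p₁ * g * p₂} ≤
        (Ω.card : ENNReal) ^ 2 * μ {x : G | ∃ q₁ ∈ Q, ∃ q₂ ∈ Q, x = q₁ * g * q₂} :=
  haar_double_coset_comparison_general μ Q P hQP Ω hPQ1 hPQ2 g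
end

section
/- For all integers n ≥ 1 and all integers d with 1 ≤ d ≤ n, one has (n·d − 1)·(n − ⌊n/d⌋ + 1) ≥ (n² − 1)·(d − 1). -/
/-!
Write `n = d q + r` with `q = ⌊n/d⌋` and `0 ≤ r < d`. Substituting `d q = n - r` makes the
`n²` terms cancel, and the gap between the two sides becomes `n (r + d - 1) + (q + d - 2)`,
which is nonnegative as soon as `n, d ≥ 1`. The natural-number subtractions only truncate when
`n = 0` or `d = 0`, where the left side vanishes.
-/

theorem mul_sub_one_mul_sub_add_one_eq_of_eq_mul_add {R : Type*} [CommRing R] {n d q r : R}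
    (h : n = d * q + r) :
    (n * d - 1) * (n - q + 1) = (n ^ 2 - 1) * (d - 1) + (n * (r + d - 1) + (q + d - 2)) := by
  subst h
  ring

theorem Nat.two_le_div_add_self {n d : ℕ} (hn : 0 < n) (hd : 0 < d) : 2 ≤ n / d + d := by
  obtain rfl | hd2 : d = 1 ∨ 2 ≤ d := by omega
  · rw [Nat.div_one]
    omega
  · exact Nat.le_add_left_of_le hd2

theorem density_exponent_ineq_nonextremal_general (n d : ℕ) :
    (n ^ 2 - 1) * (d - 1) ≤ (n * d - 1) * (n - n / d + 1) := by
  rcases Nat.eq_zero_or_pos n with rfl | hn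
  · simp
  rcases Nat.eq_zero_or_pos d with rfl | hd
  · simp
  have hqd : 2 ≤ n / d + d := Nat.two_le_div_add_self hn hd
  have hq : n / d ≤ n := Nat.div_le_self n d
  have hndiv : n = d * (n / d) + n % d := (Nat.div_add_mod n d).symm
  generalize n / d = q at hqd hq hndiv ⊢
  generalize n % d = r at hndiv
  have hn2 : 1 ≤ n ^ 2 := Nat.one_le_pow 2 n hn
  have hnd : 1 ≤ n * d := Nat.mul_pos hn hd
  zify [hq, hn2, hnd, hd] at hqd hndiv ⊢
  rw [mul_sub_one_mul_sub_add_one_eq_of_eq_mul_add hndiv]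
  have hd' : (1 : ℤ) ≤ d := by exact_mod_cast hd
  have hr : (0 : ℤ) ≤ r := r.cast_nonneg
  have hgap : (0 : ℤ) ≤ n * (r + d - 1) + (q + d - 2) :=
    add_nonneg (mul_nonneg n.cast_nonneg (by linarith)) (by linarith)
  linarith

/-- The arithmetic inequality `R_G(Q) ≥ S_G(Q'_d)` from the proof of the
density-exponent theorem: for all integers `n ≥ 1` and `1 ≤ d ≤ n`,
`(n·d − 1)·(n − ⌊n/d⌋ + 1) ≥ (n² − 1)·(d − 1)`.  Here `n / d` is natural
(floor) division. -/
theorem density_exponent_ineq_nonextremal (n d : ℕ) (hn : 1 ≤ n) (hd : 1 ≤ d)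
    (hdn : d ≤ n) :
    (n ^ 2 - 1) * (d - 1) ≤ (n * d - 1) * (n - n / d + 1) :=
  density_exponent_ineq_nonextremal_general n d
end

section
/- Let n ≥ 1, N ≥ 1, and let g₁, …, g_N and h₁, …, h_N be elements of the unitary group U(n). Then d(g₁g₂⋯g_N, h₁h₂⋯h_N) ≤ Σᵢ d(gᵢ, hᵢ), where d(g, h) := √(1 − |tr(g* h)|/n). In particular, if d(gᵢ, hᵢ) ≤ ε for every i, then d(g₁⋯g_N, h₁⋯h_N) ≤ N·ε. -/
/-!
Embed `U(n)` isometrically into `ℂ^{n×n}` with the Frobenius inner product `⟪A, B⟫ = tr(A* B)`,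
where every unitary has squared norm `n`. For vectors `x, y` of a complex inner product space,
`min_{|c| = 1} ‖x - c y‖² = ‖x‖² + ‖y‖² - 2|⟪x, y⟫|`, and this distance between the circle orbits
`S¹x` and `S¹y` satisfies the triangle inequality. On unitaries it equals `2n · d(g, h)²`, so `d`
satisfies the triangle inequality too; it is bi-invariant because
`tr((ug)* (uh)) = tr(g* h) = tr((gu)* (hu))`. Together these give
`d(g₁g₂, h₁h₂) ≤ d(g₁, h₁) + d(g₂, h₂)`, and induction on `N` gives the bound for products.
-/

/-- The bi-invariant distance `d(g,h) = √(1 − |tr(g*·h)|/n)` on the unitary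
group `U(n)`. -/
noncomputable def udist (n : ℕ) (g h : Matrix.unitaryGroup (Fin n) ℂ) : ℝ :=
  Real.sqrt (1 - ‖
    (Matrix.trace (star (g : Matrix (Fin n) (Fin n) ℂ) *
      (h : Matrix (Fin n) (Fin n) ℂ)))‖ / n)

open Matrix

section PhaseDist

variable {𝕜 E : Type*} [RCLike 𝕜] [NormedAddCommGroup E] [InnerProductSpace 𝕜 E]

variable (𝕜) in
noncomputable def phaseDist (x y : E) : ℝ :=
  √(‖x‖ ^ 2 + ‖y‖ ^ 2 - 2 * ‖(inner 𝕜 x y : 𝕜)‖)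

lemma norm_sub_smul_sq {c : 𝕜} (hc : ‖c‖ = 1) (x y : E) :
    ‖x - c • y‖ ^ 2 = ‖x‖ ^ 2 + ‖y‖ ^ 2 - 2 * RCLike.re (c * inner 𝕜 x y) := by
  rw [@norm_sub_sq 𝕜, inner_smul_right, norm_smul, hc, one_mul]
  ring

lemma phaseDist_le_norm_sub_smul {c : 𝕜} (hc : ‖c‖ = 1) (x y : E) :
    phaseDist 𝕜 x y ≤ ‖x - c • y‖ := by
  refine Real.sqrt_le_iff.mpr ⟨norm_nonneg _, ?_⟩
  have := RCLike.re_le_norm (c * inner 𝕜 x y)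
  rw [norm_mul, hc, one_mul] at this
  rw [norm_sub_smul_sq hc]
  linarith

lemma exists_norm_sub_smul_eq_phaseDist (x y : E) :
    ∃ c : 𝕜, ‖c‖ = 1 ∧ ‖x - c • y‖ = phaseDist 𝕜 x y := by
  obtain ⟨c, hc, hphase⟩ := RCLike.exists_norm_eq_mul_self (inner 𝕜 x y)
  refine ⟨c, hc, ?_⟩
  have hre : ‖(inner 𝕜 x y : 𝕜)‖ = RCLike.re (c * inner 𝕜 x y) := by
    rw [← hphase, RCLike.ofReal_re]
  rw [phaseDist, hre, ← norm_sub_smul_sq hc, Real.sqrt_sq (norm_nonneg _)]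

lemma phaseDist_triangle (x y z : E) :
    phaseDist 𝕜 x z ≤ phaseDist 𝕜 x y + phaseDist 𝕜 y z := by
  obtain ⟨a, ha, hxy⟩ := exists_norm_sub_smul_eq_phaseDist (𝕜 := 𝕜) x y
  obtain ⟨b, hb, hyz⟩ := exists_norm_sub_smul_eq_phaseDist (𝕜 := 𝕜) y z
  calc phaseDist 𝕜 x z
      ≤ ‖x - (a * b) • z‖ := phaseDist_le_norm_sub_smul (by rw [norm_mul, ha, hb, one_mul]) x z
    _ ≤ ‖x - a • y‖ + ‖a • y - (a * b) • z‖ := norm_sub_le_norm_sub_add_norm_sub _ _ _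
    _ = phaseDist 𝕜 x y + phaseDist 𝕜 y z := by
      rw [mul_smul, ← smul_sub, norm_smul, ha, one_mul, hxy, hyz]

end PhaseDist

section Frobenius

variable {𝕜 m n : Type*} [RCLike 𝕜] [Fintype m] [Fintype n]

noncomputable def frobeniusVec (A : Matrix m n 𝕜) : EuclideanSpace 𝕜 (m × n) :=
  WithLp.toLp 2 fun p => A p.1 p.2

lemma inner_frobeniusVec (A B : Matrix m n 𝕜) :
    inner 𝕜 (frobeniusVec A) (frobeniusVec B) = trace (Aᴴ * B) := by
  simp only [frobeniusVec, PiLp.inner_apply, RCLike.inner_apply, trace, diag, mul_apply,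
    conjTranspose_apply, Fintype.sum_prod_type, RCLike.star_def]
  rw [Finset.sum_comm]
  simp_rw [mul_comm]

end Frobenius

section UnitaryGroup

variable {ι : Type*} [Fintype ι] [DecidableEq ι]

lemma norm_frobeniusVec_sq (u : unitaryGroup ι ℂ) :
    ‖frobeniusVec (u : Matrix ι ι ℂ)‖ ^ 2 = Fintype.card ι := by
  have h := inner_self_eq_norm_sq (𝕜 := ℂ) (frobeniusVec (u : Matrix ι ι ℂ))
  rw [inner_frobeniusVec, ← star_eq_conjTranspose, UnitaryGroup.star_mul_self, trace_one] at h
  simpa using h.symm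

end UnitaryGroup

section TraceStarMul

variable {R ι : Type*} [CommRing R] [StarRing R] [Fintype ι] [DecidableEq ι]

lemma trace_star_mul_mul_left {u : Matrix ι ι R} (hu : u ∈ unitary (Matrix ι ι R))
    (A B : Matrix ι ι R) :
    trace (star (u * A) * (u * B)) = trace (star A * B) := by
  rw [star_mul, mul_assoc, ← mul_assoc (star u), Unitary.star_mul_self_of_mem hu, one_mul]

lemma trace_star_mul_mul_right {u : Matrix ι ι R} (hu : u ∈ unitary (Matrix ι ι R))
    (A B : Matrix ι ι R) :
    trace (star (A * u) * (B * u)) = trace (star A * B) := by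
  rw [star_mul, mul_assoc, trace_mul_comm, mul_assoc, mul_assoc,
    Unitary.mul_star_self_of_mem hu, mul_one]

end TraceStarMul

section Udist

variable {n : ℕ}

lemma phaseDist_frobeniusVec (hn : 0 < n) (g h : unitaryGroup (Fin n) ℂ) :
    phaseDist ℂ (frobeniusVec (g : Matrix (Fin n) (Fin n) ℂ)) (frobeniusVec (h : Matrix _ _ ℂ))
      = √(2 * n) * udist n g h := by
  rw [phaseDist, udist, ← Real.sqrt_mul (by positivity), norm_frobeniusVec_sq,
    norm_frobeniusVec_sq, inner_frobeniusVec, ← star_eq_conjTranspose, Fintype.card_fin]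
  congr 1
  field_simp
  ring

lemma udist_triangle (hn : 0 < n) (g h k : unitaryGroup (Fin n) ℂ) :
    udist n g k ≤ udist n g h + udist n h k := by
  have hpos : 0 < √(2 * n : ℝ) := by positivity
  have := phaseDist_triangle (𝕜 := ℂ) (frobeniusVec (g : Matrix (Fin n) (Fin n) ℂ))
    (frobeniusVec (h : Matrix _ _ ℂ)) (frobeniusVec (k : Matrix _ _ ℂ))
  rw [phaseDist_frobeniusVec hn, phaseDist_frobeniusVec hn, phaseDist_frobeniusVec hn,
    ← mul_add] at this
  exact le_of_mul_le_mul_left this hpos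

lemma udist_self (hn : 0 < n) (g : unitaryGroup (Fin n) ℂ) : udist n g g = 0 := by
  rw [udist, UnitaryGroup.star_mul_self, trace_one, Fintype.card_fin, Complex.norm_natCast,
    div_self (by positivity), sub_self, Real.sqrt_zero]

lemma udist_mul_left (u g h : unitaryGroup (Fin n) ℂ) : udist n (u * g) (u * h) = udist n g h := by
  rw [udist, UnitaryGroup.mul_val, UnitaryGroup.mul_val, trace_star_mul_mul_left u.2, udist]

lemma udist_mul_right (u g h : unitaryGroup (Fin n) ℂ) :
    udist n (g * u) (h * u) = udist n g h := by
  rw [udist, UnitaryGroup.mul_val, UnitaryGroup.mul_val, trace_star_mul_mul_right u.2, udist]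

lemma udist_mul_mul_le (hn : 0 < n) (g₁ g₂ h₁ h₂ : unitaryGroup (Fin n) ℂ) :
    udist n (g₁ * g₂) (h₁ * h₂) ≤ udist n g₁ h₁ + udist n g₂ h₂ := by
  calc udist n (g₁ * g₂) (h₁ * h₂)
      ≤ udist n (g₁ * g₂) (h₁ * g₂) + udist n (h₁ * g₂) (h₁ * h₂) := udist_triangle hn _ _ _
    _ = udist n g₁ h₁ + udist n g₂ h₂ := by rw [udist_mul_right, udist_mul_left]

end Udist

lemma ofFn_prod_le_sum {M : Type*} [Monoid M] (d : M → M → ℝ) (h_one : d 1 1 ≤ 0)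
    (h_mul : ∀ a₁ a₂ b₁ b₂, d (a₁ * a₂) (b₁ * b₂) ≤ d a₁ b₁ + d a₂ b₂) :
    ∀ {N : ℕ} (g h : Fin N → M), d (List.ofFn g).prod (List.ofFn h).prod ≤ ∑ i, d (g i) (h i)
  | 0, _, _ => by simpa using h_one
  | N + 1, g, h => by
    rw [List.ofFn_succ, List.ofFn_succ, List.prod_cons, List.prod_cons, Fin.sum_univ_succ]
    exact (h_mul _ _ _ _).trans (add_le_add_right (ofFn_prod_le_sum d h_one h_mul _ _) _)

theorem udist_prod_le_general (n N : ℕ) (hn : 1 ≤ n)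
    (g h : Fin N → Matrix.unitaryGroup (Fin n) ℂ) :
    udist n (List.ofFn g).prod (List.ofFn h).prod ≤ ∑ i, udist n (g i) (h i) ∧
    ∀ ε : ℝ, (∀ i, udist n (g i) (h i) ≤ ε) →
      udist n (List.ofFn g).prod (List.ofFn h).prod ≤ N * ε := by
  have hsum := ofFn_prod_le_sum (udist n) (udist_self hn 1).le (udist_mul_mul_le hn) g h
  refine ⟨hsum, fun ε hε => hsum.trans ?_⟩
  calc ∑ i, udist n (g i) (h i) ≤ ∑ _i : Fin N, ε := Finset.sum_le_sum fun i _ => hε i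
    _ = N * ε := by rw [Finset.sum_const, Finset.card_univ, Fintype.card_fin, nsmul_eq_mul]

/-- For unitaries `g₁,…,g_N` and `h₁,…,h_N` in `U(n)`,
`d(g₁⋯g_N, h₁⋯h_N) ≤ Σᵢ d(gᵢ,hᵢ)`; in particular, if `d(gᵢ,hᵢ) ≤ ε` for all
`i`, then `d(g₁⋯g_N, h₁⋯h_N) ≤ N·ε`. -/
theorem udist_prod_le (n N : ℕ) (hn : 1 ≤ n) (hN : 1 ≤ N)
    (g h : Fin N → Matrix.unitaryGroup (Fin n) ℂ) :
    udist n (List.ofFn g).prod (List.ofFn h).prod ≤ ∑ i, udist n (g i) (h i) ∧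
    ∀ ε : ℝ, (∀ i, udist n (g i) (h i) ≤ ε) →
      udist n (List.ofFn g).prod (List.ofFn h).prod ≤ N * ε :=
  udist_prod_le_general n N hn g h
end

section
/- Let E be a number field with class number one, let O_E be its ring of integers, and let σ : E → E be a field automorphism with σ∘σ = id. If I is a nonzero fractional ideal of O_E such that I · σ(I) = O_E, then there exists α ∈ E^× with I = (α · σ(α)⁻¹), the principal fractional ideal generated by α/σ(α). -/
open NumberField FractionalIdeal

/-!
As `O_E` is a principal ideal domain, `I = (β)` and `σ(I) = (σ β)`, so `β σ(β) = ε` is a unit.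
Writing `β = a / b` in lowest terms, `a σ(a) = ε b σ(b)` forces `a` and `σ(b)` to be associates
(`a` is prime to `b`, and `σ(b)` to `σ(a)`), whence `β = u σ(b) / b = u α / σ(α)` with
`α = b⁻¹` and `u` a unit.
-/

theorem IsRelPrime.associated_map_of_associated_mul_map {R : Type*}
    [CommMonoidWithZero R] [IsCancelMulZero R] [DecompositionMonoid R] (τ : R ≃* R) {a b : R}
    (hab : IsRelPrime a b) (h : Associated (a * τ a) (b * τ b)) : Associated (τ b) a := by
  have ha : a ∣ τ b := hab.dvd_of_dvd_mul_left ((dvd_mul_right a (τ a)).trans h.dvd)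
  have hτ : IsRelPrime (τ b) (τ a) := IsRelPrime.of_map τ.symm (by simpa using hab.symm)
  have hb : τ b ∣ a := hτ.dvd_of_dvd_mul_right ((dvd_mul_left (τ b) b).trans h.symm.dvd)
  exact associated_of_dvd_dvd hb ha

section FractionRing

variable {R K : Type*} [CommRing R] [IsDomain R] [UniqueFactorizationMonoid R] [Field K]
  [Algebra R K] [IsFractionRing R K]

theorem exists_units_smul_eq_mul_inv_map (τ : R ≃+* R) (σ : K ≃+* K)
    (hστ : ∀ r, σ (algebraMap R K r) = algebraMap R K (τ r)) {β : K} (e : Rˣ)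
    (h : e • (β * σ β) = 1) : ∃ α : K, α ≠ 0 ∧ ∃ u : Rˣ, u • β = α * (σ α)⁻¹ := by
  set a := IsFractionRing.num R β
  set b : R := (IsFractionRing.den R β : R)
  have hb : algebraMap R K b ≠ 0 := IsFractionRing.to_map_ne_zero_of_mem_nonZeroDivisors
    (IsFractionRing.den R β).2
  have hβ : algebraMap R K a = β * algebraMap R K b :=
    (div_eq_iff hb).mp (IsFractionRing.mk'_num_den' R β)
  have hab : a * τ a * e = b * τ b := IsFractionRing.injective R K <| by
    rw [Units.smul_def, Algebra.smul_def] at h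
    simp only [map_mul, ← hστ, hβ]
    linear_combination (algebraMap R K b * σ (algebraMap R K b)) * h
  obtain ⟨u, hu⟩ : Associated (τ b) a :=
    (IsFractionRing.num_den_reduced R β).associated_map_of_associated_mul_map τ.toMulEquiv ⟨e, hab⟩
  have hτb : τ b = ↑u⁻¹ * a := by rw [← hu, mul_comm, Units.mul_inv_cancel_right]
  refine ⟨(algebraMap R K b)⁻¹, inv_ne_zero hb, u⁻¹, ?_⟩
  rw [map_inv₀, inv_inv, hστ, hτb, Units.smul_def, Algebra.smul_def, map_mul, hβ]
  field_simp

end FractionRing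

theorem coe_spanSingleton_map_eq_image {R K : Type*} [CommRing R] {S : Submonoid R} [CommRing K]
    [Algebra R K] [IsLocalization S K] (τ : R ≃+* R) (σ : K ≃+* K)
    (hστ : ∀ r, σ (algebraMap R K r) = algebraMap R K (τ r)) (β : K) :
    ((spanSingleton S (σ β) : Submodule R K) : Set K) =
      σ '' (spanSingleton S β : Submodule R K) := by
  ext x
  simp only [SetLike.mem_coe, mem_coe, mem_spanSingleton, Set.mem_image]
  constructor
  · rintro ⟨r, rfl⟩
    exact ⟨τ.symm r • β, ⟨τ.symm r, rfl⟩, by simp [Algebra.smul_def, hστ]⟩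
  · rintro ⟨_, ⟨r, rfl⟩, rfl⟩
    exact ⟨τ r, by simp [Algebra.smul_def, hστ]⟩

theorem class_number_one_conjugate_ideal_general
    (E : Type*) [Field E] [NumberField E]
    (hclass : NumberField.classNumber E = 1)
    (σ : E ≃+* E)
    (I J : FractionalIdeal (nonZeroDivisors (𝓞 E)) E)
    (hJ : ((J : Submodule (𝓞 E) E) : Set E) = ⇑σ '' ((I : Submodule (𝓞 E) E) : Set E))
    (hprod : I * J = 1) :
    ∃ α : E, α ≠ 0 ∧
      I = FractionalIdeal.spanSingleton (nonZeroDivisors (𝓞 E)) (α * (σ α)⁻¹) := by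
  have := classNumber_eq_one_iff.mp hclass
  let τ := RingOfIntegers.mapRingEquiv σ
  have hστ (r : 𝓞 E) : σ (algebraMap (𝓞 E) E r) = algebraMap (𝓞 E) E (τ r) := rfl
  obtain ⟨β, rfl⟩ := (isPrincipal_iff I).mp inferInstance
  have hJβ : J = spanSingleton _ (σ β) := coeToSubmodule_injective <| SetLike.coe_injective <|
    hJ.trans (coe_spanSingleton_map_eq_image τ σ hστ β).symm
  obtain ⟨e, he⟩ : ∃ e : (𝓞 E)ˣ, e • (β * σ β) = 1 :=
    (spanSingleton_eq_spanSingleton (S := nonZeroDivisors (𝓞 E))).mp <| by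
      rw [← spanSingleton_mul_spanSingleton, ← hJβ, hprod, spanSingleton_one]
  obtain ⟨α, hα, u, hu⟩ := exists_units_smul_eq_mul_inv_map τ σ hστ e he
  exact ⟨α, hα, spanSingleton_eq_spanSingleton.mpr ⟨u, hu⟩⟩

/-- For a number field `E` of class number one with an involutive field
automorphism `σ`, any nonzero fractional ideal `I` of `O_E` whose product
with its conjugate `σ(I)` is the unit ideal is principal, generated by
`α·σ(α)⁻¹` for some `α ∈ E^×`.  Here the conjugate ideal is encoded as a
fractional ideal `J` whose underlying set is `σ '' I`. -/
theorem class_number_one_conjugate_ideal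
    (E : Type*) [Field E] [NumberField E]
    (hclass : NumberField.classNumber E = 1)
    (σ : E ≃+* E) (hσ : ∀ x, σ (σ x) = x)
    (I J : FractionalIdeal (nonZeroDivisors (𝓞 E)) E)
    (hI : I ≠ 0)
    (hJ : ((J : Submodule (𝓞 E) E) : Set E) = ⇑σ '' ((I : Submodule (𝓞 E) E) : Set E))
    (hprod : I * J = 1) :
    ∃ α : E, α ≠ 0 ∧
      I = FractionalIdeal.spanSingleton (nonZeroDivisors (𝓞 E)) (α * (σ α)⁻¹) :=
  class_number_one_conjugate_ideal_general E hclass σ I J hJ hprod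
end

section
/- Let n ≥ 1 and let (T₁, d₁), …, (T_k, d_k) be pairs of positive integers with Σᵢ Tᵢ·dᵢ = n, and suppose d := maxᵢ dᵢ ≥ 2. Then n(n+1)/2 − Σᵢ Tᵢ(Tᵢ+1)/2 + Σᵢ Tᵢ·dᵢ(dᵢ−1)/2 ≥ n·d − 1. -/
/-- The intermediate lower bound `R_G(□) ≥ n·d − 1` from the proof of the
density-exponent theorem: for a shape `((T₁,d₁),…,(T_k,d_k))` of `n`
(pairs of positive integers with `Σ Tᵢdᵢ = n`) whose largest `SL₂`-part
`D = maxᵢ dᵢ` satisfies `D ≥ 2`, one has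
`n(n+1)/2 − Σᵢ Tᵢ(Tᵢ+1)/2 + Σᵢ Tᵢdᵢ(dᵢ−1)/2 ≥ n·D − 1`. -/
theorem shape_R_lower_bound (n k D : ℕ) (hn : 1 ≤ n)
    (T d : Fin k → ℕ) (hT : ∀ i, 0 < T i) (hd : ∀ i, 0 < d i)
    (hsum : ∑ i, T i * d i = n)
    (hmax : ∀ i, d i ≤ D) (hex : ∃ i, d i = D) (hD : 2 ≤ D) :
    (n : ℚ) * (D : ℚ) - 1 ≤
      (n : ℚ) * ((n : ℚ) + 1) / 2 - (∑ i, (T i : ℚ) * ((T i : ℚ) + 1) / 2)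
        + ∑ i, (T i : ℚ) * (d i : ℚ) * ((d i : ℚ) - 1) / 2 := by
  obtain ⟨j, hj⟩ := hex
  set a : Fin k → ℚ := fun i => (T i : ℚ) * (d i : ℚ) with ha
  set g : Fin k → ℚ := fun i => (T i : ℚ)^2 + (T i : ℚ) - (T i : ℚ) * (d i : ℚ)^2 with hg
  have hsumQ : ∑ i, a i = (n : ℚ) := by
    have := congrArg (Nat.cast : ℕ → ℚ) hsum
    push_cast at this
    simpa [ha] using this
  have hT1 : ∀ i, (1 : ℚ) ≤ (T i : ℚ) := fun i => by exact_mod_cast hT i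
  have hd1 : ∀ i, (1 : ℚ) ≤ (d i : ℚ) := fun i => by exact_mod_cast hd i
  have hga : ∀ i, g i ≤ (a i)^2 := by
    intro i
    have h1 := hT1 i; have h2 := hd1 i
    have key : (a i)^2 - g i = (T i : ℚ) * ((T i : ℚ) + 1) * ((d i : ℚ)^2 - 1) := by
      simp only [ha, hg]; ring
    have hnn : (0:ℚ) ≤ (T i : ℚ) * ((T i : ℚ) + 1) * ((d i : ℚ)^2 - 1) := by
      apply mul_nonneg (mul_nonneg (by linarith) (by linarith))
      nlinarith
    linarith
  have hanneg : ∀ i, (0:ℚ) ≤ a i := fun i => by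
    have h1 := hT1 i; have h2 := hd1 i
    simp only [ha]; nlinarith
  set s := Finset.univ.erase j with hs
  have hsplit : a j + ∑ i ∈ s, a i = (n:ℚ) := by
    rw [hs, Finset.add_sum_erase _ a (Finset.mem_univ j), hsumQ]
  have hsq : ∑ i ∈ s, (a i)^2 ≤ (∑ i ∈ s, a i)^2 :=
    Finset.sum_sq_le_sq_sum_of_nonneg (fun i _ => hanneg i)
  have hgsplit : ∑ i, g i = g j + ∑ i ∈ s, g i := by
    rw [hs, Finset.add_sum_erase _ g (Finset.mem_univ j)]
  have hgs : ∑ i ∈ s, g i ≤ ∑ i ∈ s, (a i)^2 := Finset.sum_le_sum fun i _ => hga i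
  have hRnn : (0:ℚ) ≤ ∑ i ∈ s, a i := Finset.sum_nonneg fun i _ => hanneg i
  have haj : a j = (T j : ℚ) * (D : ℚ) := by simp [ha, hj]
  have hgj : g j = (T j:ℚ)^2 + (T j:ℚ) - (T j:ℚ) * (D:ℚ)^2 := by simp [hg, hj]
  have hDQ : (2:ℚ) ≤ (D:ℚ) := by exact_mod_cast hD
  have hTj : (1:ℚ) ≤ (T j:ℚ) := hT1 j
  have hmain : 2*(n:ℚ)*(D:ℚ) ≤ (n:ℚ)^2 - (∑ i, g i) + 2 := by
    set R := ∑ i ∈ s, a i with hR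
    have h1 : (n:ℚ)^2 = (a j)^2 + 2*(a j)*R + R^2 := by rw [← hsplit]; ring
    have h2 : (D:ℚ) ≤ a j := by rw [haj]; nlinarith
    have h3 : (0:ℚ) ≤ (T j:ℚ)^2*((D:ℚ)^2-1) - (T j:ℚ)*((D:ℚ)^2+1) + 2 := by
      nlinarith [mul_nonneg (by linarith : (0:ℚ) ≤ (T j:ℚ) - 1)
        (by nlinarith : (0:ℚ) ≤ (T j:ℚ)*((D:ℚ)^2-1) - 2)]
    have h4 : 2*(D:ℚ)*R ≤ 2*(a j)*R := by nlinarith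
    have h5 : R = (n:ℚ) - a j := by linarith
    have hsg : ∑ i, g i ≤ g j + R^2 := by
      rw [hgsplit]; have := le_trans hgs hsq; linarith
    have h6 : (a j)^2 + 2*(a j)*R - g j ≤ (n:ℚ)^2 - ∑ i, g i := by
      rw [h1]; linarith
    have h7 : (a j)^2 - 2*(D:ℚ)*(a j) - g j + 2
        = (T j:ℚ)^2*((D:ℚ)^2-1) - (T j:ℚ)*((D:ℚ)^2+1) + 2 := by
      rw [haj, hgj]; ring
    have h8 : 2*(D:ℚ)*R = 2*(D:ℚ)*(n:ℚ) - 2*(D:ℚ)*(a j) := by rw [h5]; ring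
    linarith
  have e1 : ∑ i, (T i : ℚ) * ((T i : ℚ) + 1) / 2 = (∑ i, ((T i:ℚ)^2 + (T i:ℚ)))/2 := by
    rw [Finset.sum_div]; exact Finset.sum_congr rfl fun i _ => by ring
  have e2 : ∑ i, (T i : ℚ) * (d i : ℚ) * ((d i : ℚ) - 1) / 2
      = (∑ i, ((T i:ℚ)*(d i:ℚ)^2 - (T i:ℚ)*(d i:ℚ)))/2 := by
    rw [Finset.sum_div]; exact Finset.sum_congr rfl fun i _ => by ring
  have e3 : ∑ i, ((T i:ℚ)^2 + (T i:ℚ)) - ∑ i, ((T i:ℚ)*(d i:ℚ)^2 - (T i:ℚ)*(d i:ℚ))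
      = (∑ i, g i) + (n:ℚ) := by
    rw [← hsumQ, ← Finset.sum_add_distrib, ← Finset.sum_sub_distrib]
    exact Finset.sum_congr rfl fun i _ => by simp only [hg, ha]; ring
  rw [e1, e2]
  linarith [hmain, e3]
end
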